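/- arXiv:1102.3014 — 3 statements merged into one kernel-verified Lean document; each statement's English description precedes it below -/
import Mathlib

section
/- Let H ∈ (1/2, 1), T > 0, and let ξ : [0,T] → ℝ be measurable with ∫₀ᵀ∫₀ᵀ φ(u−v) |ξ(u)| |ξ(v)| du dv < ∞. Then ∫₀ᵀ∫₀ᵀ φ(u−v) ξ(u) ξ(v) du dv ≥ 0; that is, the bilinear form ⟨ξ,η⟩_T = ∫₀ᵀ∫₀ᵀ φ(u−v) ξ(u) η(v) du dv is positive semidefinite (this is the claim that ⟨·,·⟩_T is a scalar product on the space |ℋ|). -/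
/-!
For `κ = H - 3/2 ∈ (-1, -1/2)` the substitution `x ↦ t x` shows that
`∫ (u - s)₊^κ (v - s)₊^κ ds = C_κ |u - v|^(2κ+1) = C_κ |u - v|^(2H-2)`
with `0 < C_κ < ∞`.
Hence `φ(u - v)` is a positive multiple of this integral, and by Fubini the quadratic form is a
positive multiple of `∫ (∫₀ᵀ ξ(u) (u - s)₊^κ du)² ds ≥ 0`.
-/

open MeasureTheory Set

/-- The fractional kernel `φ(x) = H(2H−1)|x|^{2H−2}`. -/
noncomputable def fracKernel (H x : ℝ) : ℝ := H * (2 * H - 1) * |x| ^ (2 * H - 2)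

section GramKernel

variable {α β : Type*} [MeasurableSpace α] [MeasurableSpace β]

theorem ae_prod_fst_ne_snd [MeasurableEq α] {μ ν : Measure α} [SFinite ν]
    [NullSingletonClass ν] : ∀ᵐ p ∂μ.prod ν, p.1 ≠ p.2 :=
  (Measure.ae_prod_iff_ae_ae measurableSet_diagonal.compl).2
    (Filter.Eventually.of_forall fun x => (Measure.ae_ne ν x).mono fun _ h => h.symm)

theorem integral_prod_integral_mul_nonneg {μ : Measure α} {ν : Measure β} [SFinite μ]
    [SFinite ν] {F : α → β → ℝ}
    (hF : Integrable (fun q : (α × α) × β => F q.1.1 q.2 * F q.1.2 q.2)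
      ((μ.prod μ).prod ν)) :
    0 ≤ ∫ p, ∫ s, F p.1 s * F p.2 s ∂ν ∂μ.prod μ := by
  rw [integral_integral_swap (μ := μ.prod μ) (f := fun p s => F p.1 s * F p.2 s) hF]
  refine integral_nonneg fun s => ?_
  rw [integral_prod_mul (fun u => F u s) (fun v => F v s)]
  exact mul_self_nonneg _

end GramKernel

noncomputable def truncPow (κ x : ℝ) : ℝ := if 0 < x then x ^ κ else 0

theorem truncPow_nonneg (κ x : ℝ) : 0 ≤ truncPow κ x := by
  unfold truncPow
  split_ifs with hx
  · exact Real.rpow_nonneg hx.le κ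
  · exact le_rfl

@[fun_prop]
theorem measurable_truncPow (κ : ℝ) : Measurable (truncPow κ) :=
  Measurable.ite measurableSet_Ioi (measurable_id.pow_const κ) measurable_const

theorem truncPow_sub_mul_truncPow_sub {κ u v : ℝ} (h : v < u) :
    (fun s => truncPow κ (u - s) * truncPow κ (v - s)) =
      fun s => (Ioi 0).indicator (fun r => r ^ κ * (r + (u - v)) ^ κ) (v - s) := by
  funext s
  by_cases hs : 0 < v - s
  · rw [indicator_of_mem (mem_Ioi.2 hs), truncPow, truncPow, if_pos (by linarith), if_pos hs,
      show v - s + (u - v) = u - s by ring, mul_comm]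
  · rw [indicator_of_notMem (notMem_Ioi.2 (not_lt.1 hs))]
    simp only [truncPow, if_neg hs, mul_zero]

noncomputable def truncPowConst (κ : ℝ) : ℝ := ∫ x in Ioi 0, x ^ κ * (x + 1) ^ κ

section NegativeExponent

variable {κ : ℝ} (hκ₁ : -1 < κ) (hκ₂ : κ < -(1 / 2))
include hκ₁ hκ₂

theorem integrableOn_rpow_mul_add_rpow {t : ℝ} (ht : 0 < t) :
    IntegrableOn (fun x => x ^ κ * (x + t) ^ κ) (Ioi 0) := by
  have hmeas : AEStronglyMeasurable (fun x : ℝ => x ^ κ * (x + t) ^ κ) :=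
    ((measurable_id.pow_const κ).mul
      ((measurable_id.add_const t).pow_const κ)).aestronglyMeasurable
  -- near `0` the factor `(x + t)^κ` is at most `t^κ`; near `∞` it is at most `x^κ`
  have hnear : IntegrableOn (fun x => x ^ κ * (x + t) ^ κ) (Ioc 0 1) := by
    have hpow : IntegrableOn (fun x : ℝ => x ^ κ) (Ioc 0 1) := by
      simpa [intervalIntegrable_iff, uIoc_of_le zero_le_one] using
        intervalIntegral.intervalIntegrable_rpow' (a := 0) (b := 1) hκ₁
    refine (hpow.mul_const (t ^ κ)).mono' hmeas.restrict ?_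
    filter_upwards [ae_restrict_mem measurableSet_Ioc] with x hx
    have hx₀ : 0 < x := hx.1
    rw [Real.norm_eq_abs, abs_of_nonneg (by positivity)]
    exact mul_le_mul_of_nonneg_left
      (Real.rpow_le_rpow_of_nonpos ht (by linarith) (by linarith)) (by positivity)
  have hfar : IntegrableOn (fun x => x ^ κ * (x + t) ^ κ) (Ioi 1) := by
    refine (integrableOn_Ioi_rpow_of_lt (a := κ + κ) (by linarith) one_pos).mono'
      hmeas.restrict ?_
    filter_upwards [ae_restrict_mem measurableSet_Ioi] with x (hx : 1 < x)
    have hx₀ : 0 < x := one_pos.trans hx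
    rw [Real.norm_eq_abs, abs_of_nonneg (by positivity), Real.rpow_add hx₀]
    exact mul_le_mul_of_nonneg_left
      (Real.rpow_le_rpow_of_nonpos hx₀ (by linarith) (by linarith)) (by positivity)
  rw [← Ioc_union_Ioi_eq_Ioi zero_le_one]
  exact hnear.union hfar

theorem truncPowConst_pos : 0 < truncPowConst κ := by
  refine (setIntegral_pos_iff_support_of_nonneg_ae ?_
    (integrableOn_rpow_mul_add_rpow hκ₁ hκ₂ one_pos)).2 ?_
  · filter_upwards [ae_restrict_mem measurableSet_Ioi] with x (hx : 0 < x)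
    positivity
  · have hsupp : Ioi 0 ⊆ Function.support (fun x : ℝ => x ^ κ * (x + 1) ^ κ) ∩ Ioi 0 :=
      fun x (hx : 0 < x) => ⟨Function.mem_support.2 (by positivity), hx⟩
    exact (by simp : (0 : ENNReal) < volume (Ioi (0 : ℝ))).trans_le (measure_mono hsupp)

theorem integral_rpow_mul_add_rpow {t : ℝ} (ht : 0 < t) :
    ∫ x in Ioi 0, x ^ κ * (x + t) ^ κ = t ^ (2 * κ + 1) * truncPowConst κ := by
  have hscaled :
      ∫ x in Ioi 0, (t * x) ^ κ * (t * x + t) ^ κ = t ^ κ * t ^ κ * truncPowConst κ := by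
    rw [truncPowConst, ← integral_const_mul]
    refine setIntegral_congr_fun measurableSet_Ioi fun x (hx : 0 < x) => ?_
    rw [show t * x + t = t * (x + 1) by ring, Real.mul_rpow ht.le hx.le,
      Real.mul_rpow ht.le (by linarith)]
    ring
  have hsubst := integral_comp_mul_left_Ioi' (fun x => x ^ κ * (x + t) ^ κ) 0 ht
  rw [mul_zero, hscaled, smul_eq_mul] at hsubst
  rw [← hsubst, show 2 * κ + 1 = κ + κ + 1 by ring, Real.rpow_add ht, Real.rpow_add ht,
    Real.rpow_one]
  ring

theorem integrable_truncPow_mul_truncPow {u v : ℝ} (huv : u ≠ v) :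
    Integrable fun s => truncPow κ (u - s) * truncPow κ (v - s) := by
  wlog h : v < u generalizing u v
  · simpa only [mul_comm] using this huv.symm (huv.lt_or_gt.resolve_right h)
  rw [truncPow_sub_mul_truncPow_sub h]
  exact ((integrable_indicator_iff measurableSet_Ioi).2
    (integrableOn_rpow_mul_add_rpow hκ₁ hκ₂ (sub_pos.2 h))).comp_sub_left v

theorem integral_truncPow_mul_truncPow {u v : ℝ} (huv : u ≠ v) :
    ∫ s, truncPow κ (u - s) * truncPow κ (v - s) =
      truncPowConst κ * |u - v| ^ (2 * κ + 1) := by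
  wlog h : v < u generalizing u v
  · simpa only [mul_comm, abs_sub_comm] using this huv.symm (huv.lt_or_gt.resolve_right h)
  rw [truncPow_sub_mul_truncPow_sub h, integral_sub_left_eq_self,
    integral_indicator measurableSet_Ioi, integral_rpow_mul_add_rpow hκ₁ hκ₂ (sub_pos.2 h),
    abs_of_pos (sub_pos.2 h), mul_comm]

end NegativeExponent

@[fun_prop]
theorem measurable_fracKernel (H : ℝ) : Measurable (fracKernel H) := by
  unfold fracKernel
  fun_prop

theorem fracKernel_nonneg {H : ℝ} (hH : 1 / 2 ≤ H) (x : ℝ) : 0 ≤ fracKernel H x := by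
  have : 0 ≤ 2 * H - 1 := by linarith
  unfold fracKernel
  positivity

theorem integral_mul_truncPow_mul_eq_fracKernel {H : ℝ} (hH : H ∈ Ioo (1 / 2) 1) {u v : ℝ}
    (huv : u ≠ v) (a b : ℝ) :
    ∫ s, a * truncPow (H - 3 / 2) (u - s) * (b * truncPow (H - 3 / 2) (v - s)) =
      truncPowConst (H - 3 / 2) / (H * (2 * H - 1)) * (fracKernel H (u - v) * a * b) := by
  have hκ₁ : -1 < H - 3 / 2 := by linarith [hH.1]
  have hκ₂ : H - 3 / 2 < -(1 / 2) := by linarith [hH.2]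
  have hH₀ : H ≠ 0 := by linarith [hH.1]
  have hH₁ : 2 * H - 1 ≠ 0 := by linarith [hH.1]
  calc ∫ s, a * truncPow (H - 3 / 2) (u - s) * (b * truncPow (H - 3 / 2) (v - s))
      = a * b * ∫ s, truncPow (H - 3 / 2) (u - s) * truncPow (H - 3 / 2) (v - s) := by
        rw [← integral_const_mul]
        congr 1 with s
        ring
    _ = _ := by
        rw [integral_truncPow_mul_truncPow hκ₁ hκ₂ huv, fracKernel,
          show 2 * (H - 3 / 2) + 1 = 2 * H - 2 by ring, div_mul_eq_mul_div,
          eq_div_iff (mul_ne_zero hH₀ hH₁)]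
        ring

section QuadraticForm

variable {H : ℝ} (hH : H ∈ Ioo (1 / 2) 1) {μ : Measure ℝ} [SFinite μ]
  [NullSingletonClass μ] {ξ : ℝ → ℝ} (hξ : Measurable ξ)
  (hint : Integrable (fun p : ℝ × ℝ => fracKernel H (p.1 - p.2) * |ξ p.1| * |ξ p.2|)
    (μ.prod μ))
include hH hξ hint

theorem integrable_truncPow_gram :
    Integrable (fun q : (ℝ × ℝ) × ℝ => ξ q.1.1 * truncPow (H - 3 / 2) (q.1.1 - q.2) *
      (ξ q.1.2 * truncPow (H - 3 / 2) (q.1.2 - q.2))) ((μ.prod μ).prod volume) := by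
  refine (integrable_prod_iff (by fun_prop)).2 ⟨?_, ?_⟩
  · filter_upwards [ae_prod_fst_ne_snd] with p hp
    simpa only [mul_mul_mul_comm] using
      (integrable_truncPow_mul_truncPow (by linarith [hH.1]) (by linarith [hH.2]) hp).const_mul
        (ξ p.1 * ξ p.2)
  · refine (hint.const_mul (truncPowConst (H - 3 / 2) / (H * (2 * H - 1)))).congr ?_
    filter_upwards [ae_prod_fst_ne_snd] with p hp
    simp only [norm_mul, Real.norm_eq_abs, abs_of_nonneg (truncPow_nonneg _ _)]
    exact (integral_mul_truncPow_mul_eq_fracKernel hH hp _ _).symm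

theorem integral_integral_fracKernel_mul_nonneg :
    0 ≤ ∫ u, ∫ v, fracKernel H (u - v) * ξ u * ξ v ∂μ ∂μ := by
  set c := truncPowConst (H - 3 / 2) / (H * (2 * H - 1))
  have hc : 0 < c :=
    div_pos (truncPowConst_pos (by linarith [hH.1]) (by linarith [hH.2]))
      (mul_pos (by linarith [hH.1]) (by linarith [hH.1]))
  have hsigned :
      Integrable (fun p : ℝ × ℝ => fracKernel H (p.1 - p.2) * ξ p.1 * ξ p.2) (μ.prod μ) :=
    hint.mono' (by fun_prop) (Filter.Eventually.of_forall fun p => by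
      rw [Real.norm_eq_abs, abs_mul, abs_mul, abs_of_nonneg (fracKernel_nonneg hH.1.le _)])
  have hrepr : ∀ᵐ p ∂μ.prod μ, fracKernel H (p.1 - p.2) * ξ p.1 * ξ p.2 =
      c⁻¹ * ∫ s, ξ p.1 * truncPow (H - 3 / 2) (p.1 - s) *
        (ξ p.2 * truncPow (H - 3 / 2) (p.2 - s)) := by
    filter_upwards [ae_prod_fst_ne_snd] with p hp
    rw [integral_mul_truncPow_mul_eq_fracKernel hH hp, inv_mul_cancel_left₀ hc.ne']
  rw [integral_integral hsigned, integral_congr_ae hrepr, integral_const_mul]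
  exact mul_nonneg (inv_nonneg.2 hc.le) (integral_prod_integral_mul_nonneg
    (F := fun u s => ξ u * truncPow (H - 3 / 2) (u - s)) (integrable_truncPow_gram hH hξ hint))

end QuadraticForm

theorem fracKernel_quadratic_form_nonneg_general
    (H T : ℝ) (hH : H ∈ Set.Ioo (1/2 : ℝ) 1)
    (ξ : ℝ → ℝ) (hmeas : Measurable ξ)
    (hint : IntegrableOn
      (fun p : ℝ × ℝ => fracKernel H (p.1 - p.2) * |ξ p.1| * |ξ p.2|)
      (Set.Icc 0 T ×ˢ Set.Icc 0 T)) :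
    0 ≤ ∫ u in Set.Icc (0:ℝ) T, ∫ v in Set.Icc (0:ℝ) T,
        fracKernel H (u - v) * ξ u * ξ v := by
  refine integral_integral_fracKernel_mul_nonneg hH hmeas ?_
  rwa [Measure.prod_restrict, ← Measure.volume_eq_prod]

/-- The bilinear form `⟨ξ,ξ⟩_T = ∫₀ᵀ∫₀ᵀ φ(u−v) ξ(u) ξ(v) du dv` is positive
semidefinite on measurable `ξ` with finite `|ℋ|`-norm. -/
theorem fracKernel_quadratic_form_nonneg
    (H T : ℝ) (hH : H ∈ Set.Ioo (1/2 : ℝ) 1) (hT : 0 < T)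
    (ξ : ℝ → ℝ) (hmeas : Measurable ξ)
    (hint : IntegrableOn
      (fun p : ℝ × ℝ => fracKernel H (p.1 - p.2) * |ξ p.1| * |ξ p.2|)
      (Set.Icc 0 T ×ˢ Set.Icc 0 T)) :
    0 ≤ ∫ u in Set.Icc (0:ℝ) T, ∫ v in Set.Icc (0:ℝ) T,
        fracKernel H (u - v) * ξ u * ξ v :=
  fracKernel_quadratic_form_nonneg_general H T hH ξ hmeas hint
end

section
/- The function t ↦ ‖σ‖_t² = ∫₀ᵗ∫₀ᵗ φ(u−v) σ(u) σ(v) du dv is differentiable at every t ∈ (0,T], with derivative (d/dt)(‖σ‖_t²) = 2 σ(t) σ̂(t), and this derivative depends continuously on t. Moreover, if in addition σ(t) ≠ 0 for every t ∈ [0,T], then 2 σ(t) σ̂(t) > 0 for every t ∈ (0,T]. -/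
/-!
Cutting the square `[0,t]²` along the diagonal and using the symmetry of `φ` gives
`‖σ‖_t² = 2 ∫₀ᵗ σ(u) σ̂(u) du`. The function `σ̂` is continuous, being the Volterra convolution of
the locally integrable kernel `φ` with the continuous `σ`, so the fundamental theorem of calculus
gives the derivative. For positivity, `σ` has constant sign by the intermediate value theorem and
`φ > 0` off the diagonal, so `σ(t) σ̂(t) = ∫₀ᵗ φ(t−r) σ(t) σ(r) dr > 0`.
-/

open MeasureTheory Set intervalIntegral

/-- `σ̂(t) = ∫₀ᵗ φ(t−r) σ(r) dr`. -/
noncomputable def hatSigma (H : ℝ) (σ : ℝ → ℝ) (t : ℝ) : ℝ :=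
  ∫ r in (0:ℝ)..t, fracKernel H (t - r) * σ r

/-- `‖σ‖_t² = ∫₀ᵗ∫₀ᵗ φ(u−v) σ(u) σ(v) du dv`. -/
noncomputable def fracNormSq (H : ℝ) (σ : ℝ → ℝ) (t : ℝ) : ℝ :=
  ∫ u in (0:ℝ)..t, ∫ v in (0:ℝ)..t, fracKernel H (u - v) * σ u * σ v

open Filter

theorem IsPreconnected.mul_pos_of_ne_zero {X : Type*} [TopologicalSpace X] {s : Set X}
    (hs : IsPreconnected s) {f : X → ℝ} (hf : ContinuousOn f s) (hne : ∀ x ∈ s, f x ≠ 0)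
    {x y : X} (hx : x ∈ s) (hy : y ∈ s) : 0 < f x * f y := by
  by_contra! hxy
  have h0 : (0:ℝ) ∈ uIcc (f x) (f y) := mem_uIcc.2 ((mul_nonpos_iff.1 hxy).symm.imp id And.symm)
  obtain ⟨z, hz, hz0⟩ := (isPreconnected_iff_ordConnected.1 (hs.image f hf)).uIcc_subset
    (mem_image_of_mem f hx) (mem_image_of_mem f hy) h0
  exact hne z hz hz0

theorem continuous_intervalIntegral_mul_comp_sub {f G : ℝ → ℝ} {a b M : ℝ}
    (hf : IntervalIntegrable f volume a b) (hG : Continuous G) (hGM : ∀ x, ‖G x‖ ≤ M) :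
    Continuous fun t => ∫ s in a..b, f s * G (t - s) := by
  refine continuous_of_dominated_interval (bound := fun s => ‖f s‖ * M)
    (fun t => ?_) (fun t => ?_) (hf.norm.mul_const M) ?_
  · exact hf.def'.aestronglyMeasurable.mul (by fun_prop)
  · exact Eventually.of_forall fun s _ => (norm_mul_le _ _).trans
      (mul_le_mul_of_nonneg_left (hGM _) (norm_nonneg _))
  · exact Eventually.of_forall fun s _ => by fun_prop

theorem intervalIntegral_mul_comp_sub_eq_of_nonpos {f G : ℝ → ℝ} {t T : ℝ} (ht : t ∈ Icc 0 T)
    (hf : IntervalIntegrable f volume 0 T) (hG : Continuous G) (hG0 : ∀ x ≤ 0, G x = 0) :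
    ∫ s in (0:ℝ)..T, f s * G (t - s) = ∫ s in (0:ℝ)..t, f s * G (t - s) := by
  have hfG : ∀ {a b}, a ∈ uIcc 0 T → b ∈ uIcc 0 T →
      IntervalIntegrable (fun s => f s * G (t - s)) volume a b := fun ha hb =>
    (hf.mono_set (uIcc_subset_uIcc ha hb)).mul_continuousOn
      (by fun_prop : Continuous fun s => G (t - s)).continuousOn
  have htail : ∫ s in t..T, f s * G (t - s) = 0 := by
    rw [← intervalIntegral.integral_zero]
    refine integral_congr fun s hs => ?_
    rw [uIcc_of_le ht.2] at hs
    simp [hG0 _ (sub_nonpos.2 hs.1)]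
  have htT : t ∈ uIcc 0 T := Icc_subset_uIcc ht
  rw [← integral_add_adjacent_intervals (hfG left_mem_uIcc htT) (hfG htT right_mem_uIcc), htail,
    add_zero]

theorem continuousOn_intervalIntegral_sub_mul {f g : ℝ → ℝ} {T : ℝ}
    (hf : IntervalIntegrable f volume 0 T) (hg : ContinuousOn g (Icc 0 T)) :
    ContinuousOn (fun t => ∫ r in (0:ℝ)..t, f (t - r) * g r) (Icc 0 T) := by
  rcases lt_or_ge T 0 with hT | hT
  · simp [Icc_eq_empty_of_lt hT]
  -- extending `g` by constants and subtracting `g 0` gives a continuous `g₀` vanishing on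
  -- `(-∞, 0]`, which lets the variable upper limit be replaced by `T`
  set g₀ : ℝ → ℝ := fun x => IccExtend hT (fun x : Icc 0 T => g x) x - g 0
  have hg₀ : Continuous g₀ :=
    (continuous_IccExtend_iff.2 (continuousOn_iff_continuous_domRestrict.1 hg)).sub
      continuous_const
  have hg₀_nonpos : ∀ x ≤ 0, g₀ x = 0 := fun x hx => by
    simp [g₀, IccExtend_of_le_left _ _ hx]
  obtain ⟨M, hM⟩ := isCompact_Icc.exists_bound_of_continuousOn hg
  have hg₀_bound : ∀ x, ‖g₀ x‖ ≤ M + M := fun x =>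
    (norm_sub_le _ _).trans (add_le_add (hM _ (Subtype.prop _)) (hM 0 ⟨le_rfl, hT⟩))
  have hrepr : EqOn (fun t => ∫ r in (0:ℝ)..t, f (t - r) * g r)
      (fun t => (∫ s in (0:ℝ)..T, f s * g₀ (t - s)) + g 0 * ∫ s in (0:ℝ)..t, f s) (Icc 0 T) := by
    intro t ht
    have hft : IntervalIntegrable f volume 0 t :=
      hf.mono_set (by rw [uIcc_of_le ht.1, uIcc_of_le hT]; exact Icc_subset_Icc_right ht.2)
    have hg_sub : EqOn (fun s => f s * g (t - s)) (fun s => f s * g₀ (t - s) + g 0 * f s)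
        (uIcc 0 t) := fun s hs => by
      rw [uIcc_of_le ht.1] at hs
      have hts : t - s ∈ Icc 0 T := ⟨sub_nonneg.2 hs.2, by linarith [hs.1, ht.2]⟩
      simp only [g₀, IccExtend_of_mem _ _ hts]
      ring
    calc ∫ r in (0:ℝ)..t, f (t - r) * g r = ∫ s in (0:ℝ)..t, f s * g (t - s) := by
          simpa using integral_comp_sub_left (a := 0) (b := t) (fun s => f s * g (t - s)) t
      _ = ∫ s in (0:ℝ)..t, (f s * g₀ (t - s) + g 0 * f s) := integral_congr hg_sub
      _ = _ := by
          rw [integral_add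
            (hft.mul_continuousOn (by fun_prop : Continuous fun s => g₀ (t - s)).continuousOn)
            (hft.const_mul _), intervalIntegral.integral_const_mul,
            ← intervalIntegral_mul_comp_sub_eq_of_nonpos ht hf hg₀ hg₀_nonpos]
  refine ContinuousOn.congr (ContinuousOn.add ?_ (continuousOn_const.mul ?_)) hrepr
  · exact (continuous_intervalIntegral_mul_comp_sub hf hg₀ hg₀_bound).continuousOn
  · simpa [uIcc_of_le hT] using continuousOn_primitive_interval' hf left_mem_uIcc

theorem integrable_comp_sub_mul_mul_restrict_prod {φ a b : ℝ → ℝ} {t : ℝ}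
    (hφ : IntervalIntegrable φ volume (-t) t) (ha : ContinuousOn a (Icc 0 t))
    (hb : ContinuousOn b (Icc 0 t)) :
    Integrable (Function.uncurry fun u v => φ (u - v) * a u * b v)
      ((volume.restrict (Ioc 0 t)).prod (volume.restrict (Ioc 0 t))) := by
  set μ := volume.restrict (Ioc (0:ℝ) t)
  have hsq : ∀ᵐ p ∂μ.prod μ, p ∈ Ioc 0 t ×ˢ Ioc 0 t := by
    rw [Measure.prod_restrict]; exact ae_restrict_mem (measurableSet_Ioc.prod measurableSet_Ioc)
  have hkernel : Integrable (fun p : ℝ × ℝ => φ (p.1 - p.2)) (μ.prod μ) := by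
    have h1 : Integrable (fun _ : ℝ => (1:ℝ)) μ :=
      integrableOn_const (C := (1:ℝ)) measure_Ioc_lt_top.ne
    have := (h1.convolution_integrand (ContinuousLinearMap.lsmul ℝ ℝ) (μ := volume)
      ((integrable_indicator_iff measurableSet_Ioc).2 hφ.1)).mono_measure
      (Measure.prod_mono (Measure.restrict_le_self (s := Ioc 0 t)) le_rfl)
    refine this.congr ?_
    filter_upwards [hsq] with p hp
    obtain ⟨⟨hu0, hut⟩, ⟨hv0, hvt⟩⟩ := hp
    simp [indicator_of_mem (show p.1 - p.2 ∈ Ioc (-t) t from ⟨by linarith, by linarith⟩)]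
  obtain ⟨A, hA⟩ := isCompact_Icc.exists_bound_of_continuousOn ha
  obtain ⟨B, hB⟩ := isCompact_Icc.exists_bound_of_continuousOn hb
  have hab : AEStronglyMeasurable (fun p : ℝ × ℝ => a p.1 * b p.2) (μ.prod μ) :=
    ((ha.mono Ioc_subset_Icc_self).aestronglyMeasurable measurableSet_Ioc).comp_fst.mul
      ((hb.mono Ioc_subset_Icc_self).aestronglyMeasurable measurableSet_Ioc).comp_snd
  refine (hkernel.bdd_mul hab (c := A * B) ?_).congr (Eventually.of_forall fun p => ?_)
  · filter_upwards [hsq] with p hp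
    rw [norm_mul]
    exact mul_le_mul (hA _ (Ioc_subset_Icc_self hp.1)) (hB _ (Ioc_subset_Icc_self hp.2))
      (norm_nonneg _) ((norm_nonneg _).trans (hA _ (Ioc_subset_Icc_self hp.1)))
  · simp only [Function.uncurry]; ring

theorem integral_square_eq_integral_lower_add_upper {k : ℝ → ℝ → ℝ} {t : ℝ} (ht : 0 ≤ t)
    (hk : ∀ᵐ u ∂volume.restrict (Ioc 0 t), IntegrableOn (k u) (Ioc 0 t)) :
    ∫ u in (0:ℝ)..t, ∫ v in (0:ℝ)..t, k u v
      = ∫ u in (0:ℝ)..t, ((∫ v in (0:ℝ)..u, k u v) + ∫ v in u..t, k u v) := by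
  refine intervalIntegral.integral_congr_ae ?_
  rw [uIoc_of_le ht, ← ae_restrict_iff' measurableSet_Ioc]
  filter_upwards [hk, ae_restrict_mem measurableSet_Ioc] with u hku hu
  have hsec : ∀ {a b}, a ≤ b → Ioc a b ⊆ Ioc 0 t → IntervalIntegrable (k u) volume a b :=
    fun hab h => (intervalIntegrable_iff_integrableOn_Ioc_of_le hab).2 (hku.mono_set h)
  exact (integral_add_adjacent_intervals (hsec hu.1.le (Ioc_subset_Ioc_right hu.2))
    (hsec hu.2 (Ioc_subset_Ioc_left hu.1.le))).symm

theorem integral_square_eq_two_mul_integral_lower {k : ℝ → ℝ → ℝ} {t : ℝ} (ht : 0 ≤ t)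
    (hsymm : ∀ u v, k u v = k v u)
    (hk : Integrable (Function.uncurry k)
      ((volume.restrict (Ioc 0 t)).prod (volume.restrict (Ioc 0 t)))) :
    ∫ u in (0:ℝ)..t, ∫ v in (0:ℝ)..t, k u v = 2 * ∫ u in (0:ℝ)..t, ∫ v in (0:ℝ)..u, k u v := by
  set μ := volume.restrict (Ioc (0:ℝ) t)
  set kl : ℝ → ℝ → ℝ := fun u v => (Iic u).indicator (k u) v
  have hkl : Integrable (Function.uncurry kl) (μ.prod μ) := by
    refine (hk.indicator (measurableSet_le measurable_snd measurable_fst)).congr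
      (Eventually.of_forall fun p => ?_)
    by_cases h : p.2 ≤ p.1 <;> simp [kl, h, Function.uncurry]
  have hrows : ∀ u ∈ Ioc 0 t, ∫ v, kl u v ∂μ = ∫ v in (0:ℝ)..u, k u v := fun u hu => by
    rw [MeasureTheory.integral_indicator measurableSet_Iic,
      Measure.restrict_restrict measurableSet_Iic, integral_of_le hu.1.le,
      Iic_inter_Ioc_of_le hu.2]
  have hcols : ∀ v ∈ Ioc 0 t, ∫ u, kl u v ∂μ = ∫ u in v..t, k v u := fun v hv => by
    have hsection : (fun u => kl u v) = (Ici v).indicator (fun u => k v u) := by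
      ext u; by_cases h : v ≤ u <;> simp [kl, h, hsymm u v]
    have hinter : Ici v ∩ Ioc 0 t = Icc v t := by
      ext x; exact ⟨fun h => ⟨h.1, h.2.2⟩, fun h => ⟨h.1, hv.1.trans_le h.1, h.2⟩⟩
    rw [hsection, MeasureTheory.integral_indicator measurableSet_Ici,
      Measure.restrict_restrict measurableSet_Ici, hinter, integral_of_le hv.2,
      integral_Icc_eq_integral_Ioc]
  have hlower : IntervalIntegrable (fun u => ∫ v in (0:ℝ)..u, k u v) volume 0 t := by
    rw [intervalIntegrable_iff_integrableOn_Ioc_of_le ht]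
    exact hkl.integral_prod_left.congr (ae_restrict_of_forall_mem measurableSet_Ioc hrows)
  have hupper : IntervalIntegrable (fun u => ∫ v in u..t, k u v) volume 0 t := by
    rw [intervalIntegrable_iff_integrableOn_Ioc_of_le ht]
    exact hkl.integral_prod_right.congr (ae_restrict_of_forall_mem measurableSet_Ioc hcols)
  have hswap : ∫ u in (0:ℝ)..t, ∫ v in (0:ℝ)..u, k u v = ∫ u in (0:ℝ)..t, ∫ v in u..t, k u v := by
    rw [integral_of_le ht, integral_of_le ht,
      ← integral_congr_ae (ae_restrict_of_forall_mem measurableSet_Ioc hrows),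
      ← integral_congr_ae (ae_restrict_of_forall_mem measurableSet_Ioc hcols)]
    exact integral_integral_swap hkl
  rw [integral_square_eq_integral_lower_add_upper (k := k) ht hk.prod_right_ae,
    integral_add hlower hupper, ← hswap, two_mul]

theorem locallyIntegrable_fracKernel {H : ℝ} (hH : 1/2 < H) :
    LocallyIntegrable (fracKernel H) := by
  have hC : 0 ≤ H * (2 * H - 1) := by nlinarith
  refine locallyIntegrable_of_norm_le_rpow (μ := volume) (C := H * (2 * H - 1)) (α := 2 - 2 * H)
    (by simp) (by simp; linarith) (Eventually.of_forall fun x => ?_) ?_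
  · rw [fracKernel, Real.norm_eq_abs, Real.norm_eq_abs, neg_sub,
      abs_of_nonneg (mul_nonneg hC (Real.rpow_nonneg (abs_nonneg x) _))]
  · exact Measurable.aestronglyMeasurable (by unfold fracKernel; fun_prop)

theorem intervalIntegrable_fracKernel {H : ℝ} (hH : 1/2 < H) (a b : ℝ) :
    IntervalIntegrable (fracKernel H) volume a b :=
  ((locallyIntegrable_fracKernel hH).integrableOn_isCompact isCompact_uIcc).intervalIntegrable

theorem fracKernel_sub_comm (H u v : ℝ) : fracKernel H (u - v) = fracKernel H (v - u) := by
  rw [fracKernel, fracKernel, abs_sub_comm]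

theorem fracKernel_pos {H x : ℝ} (hH : 1/2 < H) (hx : x ≠ 0) : 0 < fracKernel H x :=
  mul_pos (mul_pos (by linarith) (by linarith)) (Real.rpow_pos_of_pos (abs_pos.2 hx) _)

theorem fracNormSq_eq_two_mul_integral {H t : ℝ} (hH : 1/2 < H) (ht : 0 ≤ t) {σ : ℝ → ℝ}
    (hσ : ContinuousOn σ (Icc 0 t)) :
    fracNormSq H σ t = 2 * ∫ u in (0:ℝ)..t, σ u * hatSigma H σ u := by
  rw [fracNormSq, integral_square_eq_two_mul_integral_lower ht
    (fun u v => by rw [fracKernel_sub_comm]; ring)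
    (integrable_comp_sub_mul_mul_restrict_prod (intervalIntegrable_fracKernel hH _ _) hσ hσ)]
  congr 1
  refine integral_congr fun u _ => ?_
  rw [hatSigma, ← intervalIntegral.integral_const_mul]
  exact integral_congr fun v _ => by ring

theorem mul_hatSigma_pos {H t : ℝ} (hH : 1/2 < H) (ht : 0 < t) {σ : ℝ → ℝ}
    (hσ : ContinuousOn σ (Icc 0 t)) (hne : ∀ x ∈ Icc 0 t, σ x ≠ 0) :
    0 < σ t * hatSigma H σ t := by
  rw [hatSigma, ← intervalIntegral.integral_const_mul]
  refine intervalIntegral_pos_of_pos_on ?_ (fun r hr => ?_) ht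
  · have hker : IntervalIntegrable (fun r => fracKernel H (t - r)) volume 0 t := by
      simpa using (intervalIntegrable_fracKernel hH t 0).comp_sub_left t
    exact (hker.mul_continuousOn (by rwa [uIcc_of_le ht.le])).const_mul _
  · rw [mul_left_comm]
    exact mul_pos (fracKernel_pos hH (sub_ne_zero.2 hr.2.ne'))
      (isPreconnected_Icc.mul_pos_of_ne_zero hσ hne ⟨ht.le, le_rfl⟩ ⟨hr.1.le, hr.2.le⟩)

theorem fracNormSq_hasDeriv_general
    (H T : ℝ) (hH : H ∈ Set.Ioo (1/2 : ℝ) 1)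
    (σ : ℝ → ℝ) (hσ : ContinuousOn σ (Set.Icc 0 T)) :
    (∀ t ∈ Set.Ioc (0:ℝ) T,
        HasDerivWithinAt (fracNormSq H σ) (2 * σ t * hatSigma H σ t) (Set.Icc 0 T) t)
    ∧ ContinuousOn (fun t => 2 * σ t * hatSigma H σ t) (Set.Ioc 0 T)
    ∧ ((∀ t ∈ Set.Icc (0:ℝ) T, σ t ≠ 0) →
        ∀ t ∈ Set.Ioc (0:ℝ) T, 0 < 2 * σ t * hatSigma H σ t) := by
  have hσ_le : ∀ {t}, t ≤ T → ContinuousOn σ (Icc 0 t) :=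
    fun ht => hσ.mono (Icc_subset_Icc_right ht)
  have hhat : ContinuousOn (hatSigma H σ) (Icc 0 T) :=
    continuousOn_intervalIntegral_sub_mul (intervalIntegrable_fracKernel hH.1 _ _) hσ
  have hg : ContinuousOn (fun u => σ u * hatSigma H σ u) (Icc 0 T) := hσ.mul hhat
  refine ⟨fun t ht => ?_, ((continuousOn_const.mul hσ).mul hhat).mono Ioc_subset_Icc_self,
    fun hne t ht => ?_⟩
  · -- needed by the `FTCFilter` instance for `𝓝[Icc 0 T] t`
    have : Fact (t ∈ Icc 0 T) := ⟨Ioc_subset_Icc_self ht⟩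
    have hprim := integral_hasDerivWithinAt_right (s := Icc 0 T)
      ((hg.mono (Icc_subset_Icc_right ht.2)).intervalIntegrable_of_Icc ht.1.le)
      (hg.stronglyMeasurableAtFilter_nhdsWithin measurableSet_Icc t) (hg t this.out)
    rw [mul_assoc]
    exact (hprim.const_mul 2).congr
      (fun x hx => fracNormSq_eq_two_mul_integral hH.1 hx.1 (hσ_le hx.2))
      (fracNormSq_eq_two_mul_integral hH.1 ht.1.le (hσ_le ht.2))
  · rw [mul_assoc]
    exact mul_pos two_pos (mul_hatSigma_pos hH.1 ht.1 (hσ_le ht.2)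
      fun x hx => hne x ⟨hx.1, hx.2.trans ht.2⟩)

/-- The map `t ↦ ‖σ‖_t²` is differentiable on `(0,T]` with derivative
`2 σ(t) σ̂(t)` depending continuously on `t`; this derivative is positive when
`σ` never vanishes on `[0,T]`. -/
theorem fracNormSq_hasDeriv
    (H T : ℝ) (hH : H ∈ Set.Ioo (1/2 : ℝ) 1) (hT : 0 < T)
    (σ : ℝ → ℝ) (hσ : ContinuousOn σ (Set.Icc 0 T)) :
    (∀ t ∈ Set.Ioc (0:ℝ) T,
        HasDerivWithinAt (fracNormSq H σ) (2 * σ t * hatSigma H σ t) (Set.Icc 0 T) t)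
    ∧ ContinuousOn (fun t => 2 * σ t * hatSigma H σ t) (Set.Ioc 0 T)
    ∧ ((∀ t ∈ Set.Icc (0:ℝ) T, σ t ≠ 0) →
        ∀ t ∈ Set.Ioc (0:ℝ) T, 0 < 2 * σ t * hatSigma H σ t) :=
  fracNormSq_hasDeriv_general H T hH σ hσ
end

section
/- (Backward Gronwall-type inequality.) Let T > 0 and let a, α, β : [0,T] → ℝ₊ be nonnegative Borel functions such that a is nonincreasing and α, β are integrable on [0,T]. Let x : [0,T] → ℝ₊ be a nonnegative continuous function satisfying x²(t) ≤ a(t) + 2∫ₜᵀ α(s) x(s) ds + 2∫ₜᵀ β(s) x²(s) ds for all t ∈ [0,T]. Then x(t) ≤ √(a(t)) · exp(∫ₜᵀ β(s) ds) + ∫ₜᵀ α(s) exp(∫ₜˢ β(r) dr) ds for all t ∈ [0,T]. -/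
/-!
Fix `t₀` and `C > √(a t₀)`. The variation-of-constants solution `w` of the linear equation
`w t = C + ∫ₜᵀ (α + β w)` is absolutely continuous, so the fundamental theorem of calculus for
absolutely continuous functions gives `w² = C² + 2∫ₜᵀ (α w + β w²)` exactly,
while `x² ≤ a t₀ + 2∫ₜᵀ (α x + β x²)` on `[t₀, T]` because `a` is nonincreasing. At the last time
`τ` with `w τ ≤ x τ` we would have `x < w` on `(τ, T]`, hence `x τ² < w τ² ≤ x τ²`; so `x < w`
on `[t₀, T]`, and letting `C ↓ √(a t₀)` gives the bound.
-/

open MeasureTheory Set intervalIntegral Real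

open scoped NNReal

theorem LipschitzOnWith.comp_absolutelyContinuousOnInterval {X Y : Type*} [PseudoMetricSpace X]
    [PseudoMetricSpace Y] {g : X → Y} {f : ℝ → X} {K : ℝ≥0} {s : Set X} {a b : ℝ}
    (hg : LipschitzOnWith K g s) (hf : AbsolutelyContinuousOnInterval f a b)
    (hfs : MapsTo f (uIcc a b) s) :
    AbsolutelyContinuousOnInterval (g ∘ f) a b := by
  rw [absolutelyContinuousOnInterval_iff] at hf ⊢
  intro ε hε
  obtain ⟨δ, hδ, hfδ⟩ := hf (ε / (K + 1)) (by positivity)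
  refine ⟨δ, hδ, fun E hE hEδ => ?_⟩
  calc ∑ i ∈ Finset.range E.1, dist (g (f (E.2 i).1)) (g (f (E.2 i).2))
      ≤ ∑ i ∈ Finset.range E.1, K * dist (f (E.2 i).1) (f (E.2 i).2) :=
        Finset.sum_le_sum fun i hi =>
          hg.dist_le_mul _ (hfs (hE.1 i hi).1) _ (hfs (hE.1 i hi).2)
    _ = K * ∑ i ∈ Finset.range E.1, dist (f (E.2 i).1) (f (E.2 i).2) := (Finset.mul_sum ..).symm
    _ ≤ K * (ε / (K + 1)) := by gcongr; exact (hfδ E hE hEδ).le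
    _ < ε := by
      rw [mul_div_assoc', div_lt_iff₀ (by positivity)]
      nlinarith

theorem ContDiff.comp_absolutelyContinuousOnInterval {F : Type*} [NormedAddCommGroup F]
    [NormedSpace ℝ F] {g : ℝ → F} {f : ℝ → ℝ} {a b : ℝ}
    (hg : ContDiff ℝ 1 g) (hf : AbsolutelyContinuousOnInterval f a b) :
    AbsolutelyContinuousOnInterval (g ∘ f) a b := by
  obtain ⟨M, hM⟩ := hf.exists_bound
  obtain ⟨K, hK⟩ := hg.contDiffOn.exists_lipschitzOnWith one_ne_zero (convex_Icc (-M) M)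
    isCompact_Icc
  exact hK.comp_absolutelyContinuousOnInterval hf fun x hx => abs_le.mp (hM x hx)

theorem integral_left_eq_neg (f : ℝ → ℝ) (b : ℝ) :
    (fun x => ∫ r in x..b, f r) = -fun x => ∫ r in b..x, f r :=
  funext fun x => integral_symm b x

theorem IntervalIntegrable.absolutelyContinuousOnInterval_integral_left {f : ℝ → ℝ} {a b : ℝ}
    (hf : IntervalIntegrable f volume a b) :
    AbsolutelyContinuousOnInterval (fun x => ∫ r in x..b, f r) a b := by
  rw [integral_left_eq_neg]
  exact (hf.absolutelyContinuousOnInterval_intervalIntegral right_mem_uIcc).neg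

theorem IntervalIntegrable.ae_hasDerivAt_integral_left {f : ℝ → ℝ} {a b : ℝ}
    (hf : IntervalIntegrable f volume a b) :
    ∀ᵐ x, x ∈ uIcc a b → HasDerivAt (fun x => ∫ r in x..b, f r) (-f x) x := by
  filter_upwards [hf.ae_hasDerivAt_integral] with x hx hxab
  rw [integral_left_eq_neg]
  exact (hx hxab b right_mem_uIcc).neg

/-- Variation of constants: the solution of `w t = C + ∫ s in t..T, (α s + β s * w s)`. -/
noncomputable def linearBackwardSolution (α β : ℝ → ℝ) (T C t : ℝ) : ℝ :=
  exp (∫ r in t..T, β r) * (C + ∫ s in t..T, α s * exp (-∫ r in s..T, β r))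

namespace linearBackwardSolution

variable {α β : ℝ → ℝ} {t T : ℝ} (C : ℝ)

theorem intervalIntegrable_integrand (hα : IntervalIntegrable α volume t T)
    (hβ : IntervalIntegrable β volume t T) :
    IntervalIntegrable (fun s => α s * exp (-∫ r in s..T, β r)) volume t T :=
  hα.mul_continuousOn hβ.absolutelyContinuousOnInterval_integral_left.continuousOn.neg.rexp

theorem absolutelyContinuousOnInterval (hα : IntervalIntegrable α volume t T)
    (hβ : IntervalIntegrable β volume t T) :
    AbsolutelyContinuousOnInterval (linearBackwardSolution α β T C) t T :=
  (contDiff_exp.comp_absolutelyContinuousOnInterval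
      hβ.absolutelyContinuousOnInterval_integral_left).fun_mul
    ((contDiff_const.add contDiff_id).comp_absolutelyContinuousOnInterval
      (intervalIntegrable_integrand hα hβ).absolutelyContinuousOnInterval_integral_left)

theorem ae_hasDerivAt (hα : IntervalIntegrable α volume t T)
    (hβ : IntervalIntegrable β volume t T) :
    ∀ᵐ s, s ∈ uIcc t T → HasDerivAt (linearBackwardSolution α β T C)
      (-(α s + β s * linearBackwardSolution α β T C s)) s := by
  filter_upwards [hβ.ae_hasDerivAt_integral_left,
    (intervalIntegrable_integrand hα hβ).ae_hasDerivAt_integral_left] with s hB hI hs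
  refine ((hB hs).exp.mul ((hI hs).const_add C)).congr_deriv ?_
  simp only [linearBackwardSolution, exp_neg]
  field_simp
  ring

theorem sq_eq (hα : IntervalIntegrable α volume t T) (hβ : IntervalIntegrable β volume t T) :
    linearBackwardSolution α β T C t ^ 2 = C ^ 2
      + 2 * (∫ s in t..T, α s * linearBackwardSolution α β T C s)
      + 2 * ∫ s in t..T, β s * linearBackwardSolution α β T C s ^ 2 := by
  set w := linearBackwardSolution α β T C
  have hw : AbsolutelyContinuousOnInterval w t T := absolutelyContinuousOnInterval C hα hβ
  have hwT : w T = C := by simp [w, linearBackwardSolution]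
  have hαw : IntervalIntegrable (fun s => α s * w s) volume t T :=
    hα.mul_continuousOn hw.continuousOn
  have hβw : IntervalIntegrable (fun s => β s * w s ^ 2) volume t T :=
    hβ.mul_continuousOn (hw.continuousOn.pow 2)
  have hftc := hw.integral_deriv_mul_eq_sub hw
  rw [intervalIntegral.integral_congr_ae
      (g := fun s => -(2 * (α s * w s) + 2 * (β s * w s ^ 2))) ?_,
    intervalIntegral.integral_neg, integral_add (hαw.const_mul 2) (hβw.const_mul 2),
    intervalIntegral.integral_const_mul, intervalIntegral.integral_const_mul, hwT] at hftc
  · linarith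
  filter_upwards [ae_hasDerivAt C hα hβ] with s hs hs'
  rw [(hs (uIoc_subset_uIcc hs')).deriv]
  ring

theorem nonneg {C : ℝ} (hC : 0 ≤ C) (htT : t ≤ T) (hα0 : ∀ s ∈ Icc t T, 0 ≤ α s) :
    0 ≤ linearBackwardSolution α β T C t :=
  mul_nonneg (exp_pos _).le <| add_nonneg hC <| intervalIntegral.integral_nonneg htT
    fun s hs => mul_nonneg (hα0 s hs) (exp_pos _).le

theorem eq_add_integral (hβ : IntervalIntegrable β volume t T) :
    linearBackwardSolution α β T C t
      = C * exp (∫ r in t..T, β r) + ∫ s in t..T, α s * exp (∫ r in t..s, β r) := by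
  rw [linearBackwardSolution, mul_add, mul_comm, ← intervalIntegral.integral_const_mul]
  congr 1
  refine intervalIntegral.integral_congr fun s hs => ?_
  rw [← integral_interval_sub_left hβ (hβ.mono_set (uIcc_subset_uIcc_left hs)), neg_sub,
    exp_sub]
  field_simp

end linearBackwardSolution

section Comparison

variable {t T A : ℝ} {α β x : ℝ → ℝ}

theorem lt_of_sq_le_of_le_sq {A' : ℝ} {w : ℝ → ℝ}
    (hα0 : ∀ s ∈ Icc t T, 0 ≤ α s) (hβ0 : ∀ s ∈ Icc t T, 0 ≤ β s)
    (hα : IntervalIntegrable α volume t T) (hβ : IntervalIntegrable β volume t T)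
    (hx : ContinuousOn x (Icc t T)) (hw : ContinuousOn w (Icc t T))
    (hx0 : ∀ s ∈ Icc t T, 0 ≤ x s) (hw0 : ∀ s ∈ Icc t T, 0 ≤ w s) (hA : A < A')
    (hx_sq : ∀ s ∈ Icc t T,
      x s ^ 2 ≤ A + 2 * (∫ r in s..T, α r * x r) + 2 * ∫ r in s..T, β r * x r ^ 2)
    (hw_sq : ∀ s ∈ Icc t T,
      A' + 2 * (∫ r in s..T, α r * w r) + 2 * ∫ r in s..T, β r * w r ^ 2 ≤ w s ^ 2) :
    ∀ s ∈ Icc t T, x s < w s := by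
  by_contra! hS
  set S := Icc t T ∩ (fun s => x s - w s) ⁻¹' Ici 0
  have hS_closed : IsClosed S :=
    (hx.sub hw).preimage_isClosed_of_isClosed isClosed_Icc isClosed_Ici
  obtain ⟨s₀, hs₀, hws₀⟩ := hS
  have hS_ne : S.Nonempty := ⟨s₀, hs₀, sub_nonneg.mpr hws₀⟩
  have hS_bdd : BddAbove S := bddAbove_Icc.mono inter_subset_left
  set τ := sSup S
  obtain ⟨hτ, hwxτ⟩ : τ ∈ S := hS_closed.csSup_mem hS_ne hS_bdd
  have hIcc : Icc τ T ⊆ Icc t T := Icc_subset_Icc_left hτ.1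
  have hlt : ∀ s ∈ Ioo τ T, x s < w s := fun s hs => by
    by_contra! hws
    exact hs.1.not_ge (le_csSup hS_bdd ⟨hIcc (Ioo_subset_Icc_self hs), sub_nonneg.mpr hws⟩)
  have huIcc : uIcc τ T ⊆ Icc t T := uIcc_of_le hτ.2 ▸ hIcc
  have hατ := hα.mono_set (huIcc.trans Icc_subset_uIcc)
  have hβτ := hβ.mono_set (huIcc.trans Icc_subset_uIcc)
  have hαx : ∫ r in τ..T, α r * x r ≤ ∫ r in τ..T, α r * w r :=
    intervalIntegral.integral_mono_on_of_le_Ioo hτ.2 (hατ.mul_continuousOn (hx.mono huIcc))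
      (hατ.mul_continuousOn (hw.mono huIcc)) fun s hs =>
        mul_le_mul_of_nonneg_left (hlt s hs).le (hα0 s (hIcc (Ioo_subset_Icc_self hs)))
  have hβx : ∫ r in τ..T, β r * x r ^ 2 ≤ ∫ r in τ..T, β r * w r ^ 2 :=
    intervalIntegral.integral_mono_on_of_le_Ioo hτ.2
      (hβτ.mul_continuousOn ((hx.mono huIcc).pow 2))
      (hβτ.mul_continuousOn ((hw.mono huIcc).pow 2)) fun s hs =>
        have hs' := hIcc (Ioo_subset_Icc_self hs)
        mul_le_mul_of_nonneg_left (pow_le_pow_left₀ (hx0 s hs') (hlt s hs).le 2) (hβ0 s hs')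
  have hwx : w τ ^ 2 ≤ x τ ^ 2 := pow_le_pow_left₀ (hw0 τ hτ) (sub_nonneg.mp hwxτ) 2
  linarith [hx_sq τ hτ, hw_sq τ hτ]

theorem lt_linearBackwardSolution {C : ℝ}
    (hα0 : ∀ s ∈ Icc t T, 0 ≤ α s) (hβ0 : ∀ s ∈ Icc t T, 0 ≤ β s)
    (hα : IntervalIntegrable α volume t T) (hβ : IntervalIntegrable β volume t T)
    (hx : ContinuousOn x (Icc t T)) (hx0 : ∀ s ∈ Icc t T, 0 ≤ x s)
    (hx_sq : ∀ s ∈ Icc t T,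
      x s ^ 2 ≤ A + 2 * (∫ r in s..T, α r * x r) + 2 * ∫ r in s..T, β r * x r ^ 2)
    (htT : t ≤ T) (hC : √A < C) :
    x t < linearBackwardSolution α β T C t := by
  have huIcc : uIcc t T = Icc t T := uIcc_of_le htT
  refine lt_of_sq_le_of_le_sq hα0 hβ0 hα hβ hx
    (huIcc ▸ (linearBackwardSolution.absolutelyContinuousOnInterval C hα hβ).continuousOn) hx0
    (fun s hs => linearBackwardSolution.nonneg ((sqrt_nonneg A).trans hC.le) hs.2
      fun r hr => hα0 r ⟨hs.1.trans hr.1, hr.2⟩)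
    (lt_sq_of_sqrt_lt hC) hx_sq (fun s hs => ?_) t ⟨le_rfl, htT⟩
  have hsT : uIcc s T ⊆ uIcc t T := uIcc_subset_uIcc_right (huIcc ▸ hs)
  exact (linearBackwardSolution.sq_eq C (hα.mono_set hsT) (hβ.mono_set hsT)).ge

theorem le_sqrt_mul_exp_add_integral
    (hα0 : ∀ s ∈ Icc t T, 0 ≤ α s) (hβ0 : ∀ s ∈ Icc t T, 0 ≤ β s)
    (hα : IntervalIntegrable α volume t T) (hβ : IntervalIntegrable β volume t T)
    (hx : ContinuousOn x (Icc t T)) (hx0 : ∀ s ∈ Icc t T, 0 ≤ x s)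
    (hx_sq : ∀ s ∈ Icc t T,
      x s ^ 2 ≤ A + 2 * (∫ r in s..T, α r * x r) + 2 * ∫ r in s..T, β r * x r ^ 2)
    (htT : t ≤ T) :
    x t ≤ √A * exp (∫ s in t..T, β s) + ∫ s in t..T, α s * exp (∫ r in t..s, β r) := by
  have hE : 0 < exp (∫ s in t..T, β s) := exp_pos _
  suffices h : (x t - ∫ s in t..T, α s * exp (∫ r in t..s, β r)) / exp (∫ s in t..T, β s)
      ≤ √A by
    rw [div_le_iff₀ hE] at h
    linarith
  refine le_of_forall_gt_imp_ge_of_dense fun C hC => ?_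
  rw [div_le_iff₀ hE]
  linarith [linearBackwardSolution.eq_add_integral C hβ ▸
    lt_linearBackwardSolution hα0 hβ0 hα hβ hx hx0 hx_sq htT hC]

end Comparison

theorem backward_gronwall_general
    (T : ℝ) (a α β x : ℝ → ℝ)
    (hα_nonneg : ∀ t ∈ Set.Icc (0:ℝ) T, 0 ≤ α t)
    (hβ_nonneg : ∀ t ∈ Set.Icc (0:ℝ) T, 0 ≤ β t)
    (ha_anti : AntitoneOn a (Set.Icc 0 T))
    (hα_int : IntegrableOn α (Set.Icc 0 T))
    (hβ_int : IntegrableOn β (Set.Icc 0 T))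
    (hx_cont : ContinuousOn x (Set.Icc 0 T))
    (hx_nonneg : ∀ t ∈ Set.Icc (0:ℝ) T, 0 ≤ x t)
    (hineq : ∀ t ∈ Set.Icc (0:ℝ) T,
      x t ^ 2 ≤ a t + 2 * (∫ s in t..T, α s * x s) + 2 * ∫ s in t..T, β s * x s ^ 2) :
    ∀ t ∈ Set.Icc (0:ℝ) T,
      x t ≤ Real.sqrt (a t) * Real.exp (∫ s in t..T, β s)
        + ∫ s in t..T, α s * Real.exp (∫ r in t..s, β r) := by
  intro t ht
  have hsub : Icc t T ⊆ Icc 0 T := Icc_subset_Icc_left ht.1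
  have huIcc : uIcc t T ⊆ Icc 0 T := uIcc_of_le ht.2 ▸ hsub
  refine le_sqrt_mul_exp_add_integral (fun s hs => hα_nonneg s (hsub hs))
    (fun s hs => hβ_nonneg s (hsub hs)) (hα_int.mono_set huIcc).intervalIntegrable
    (hβ_int.mono_set huIcc).intervalIntegrable (hx_cont.mono hsub)
    (fun s hs => hx_nonneg s (hsub hs)) (fun s hs => ?_) ht.2
  have has : a s ≤ a t := ha_anti (hsub ⟨le_rfl, ht.2⟩) (hsub hs) hs.1
  linarith [hineq s (hsub hs)]

/-- Backward Gronwall-type inequality: if `x ≥ 0` is continuous on `[0,T]` and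
`x²(t) ≤ a(t) + 2∫ₜᵀ α x + 2∫ₜᵀ β x²` with `a` nonincreasing and `α, β ≥ 0`
integrable, then `x(t) ≤ √(a(t)) exp(∫ₜᵀ β) + ∫ₜᵀ α(s) exp(∫ₜˢ β) ds`. -/
theorem backward_gronwall
    (T : ℝ) (hT : 0 < T) (a α β x : ℝ → ℝ)
    (ha_meas : Measurable a) (hα_meas : Measurable α) (hβ_meas : Measurable β)
    (ha_nonneg : ∀ t ∈ Set.Icc (0:ℝ) T, 0 ≤ a t)
    (hα_nonneg : ∀ t ∈ Set.Icc (0:ℝ) T, 0 ≤ α t)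
    (hβ_nonneg : ∀ t ∈ Set.Icc (0:ℝ) T, 0 ≤ β t)
    (ha_anti : AntitoneOn a (Set.Icc 0 T))
    (hα_int : IntegrableOn α (Set.Icc 0 T))
    (hβ_int : IntegrableOn β (Set.Icc 0 T))
    (hx_cont : ContinuousOn x (Set.Icc 0 T))
    (hx_nonneg : ∀ t ∈ Set.Icc (0:ℝ) T, 0 ≤ x t)
    (hineq : ∀ t ∈ Set.Icc (0:ℝ) T,
      x t ^ 2 ≤ a t + 2 * (∫ s in t..T, α s * x s) + 2 * ∫ s in t..T, β s * x s ^ 2) :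
    ∀ t ∈ Set.Icc (0:ℝ) T,
      x t ≤ Real.sqrt (a t) * Real.exp (∫ s in t..T, β s)
        + ∫ s in t..T, α s * Real.exp (∫ r in t..s, β r) :=
  backward_gronwall_general T a α β x hα_nonneg hβ_nonneg ha_anti hα_int hβ_int hx_cont hx_nonneg
    hineq
end
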